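/- arXiv:1308.6812 — 2 statements merged into one kernel-verified Lean document; each statement's English description precedes it below -/
import Mathlib

section
/- For a finite group G and subset S ⊆ G, the Cayley digraph Cay(G,S) is a CI-graph if and only if every two regular subgroups of Aut(Cay(G,S)) that are isomorphic to G are conjugate in Aut(Cay(G,S)). -/
def biCayley (G : Type*) [Group G] (S : Set G) : SimpleGraph (G × Bool) where
  Adj v w := (v.2 = false ∧ w.2 = true ∧ w.1 * v.1⁻¹ ∈ S) ∨
             (v.2 = true ∧ w.2 = false ∧ v.1 * w.1⁻¹ ∈ S)
  symm := ⟨fun v w h => by tauto⟩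
  loopless := ⟨fun v h => by rcases h with ⟨h1,h2,_⟩|⟨h1,h2,_⟩ <;> simp [h1] at h2⟩

def biTrans (G : Type*) [Group G] : G →* Equiv.Perm (G × Bool) where
  toFun g := ⟨fun v => (v.1 * g⁻¹, v.2), fun v => (v.1 * g, v.2),
    fun v => by simp, fun v => by simp⟩
  map_one' := by ext v <;> simp
  map_mul' a b := by ext v <;> simp [mul_assoc]

def graphAut {V : Type*} (Γ : SimpleGraph V) : Subgroup (Equiv.Perm V) where
  carrier := {f | ∀ a b, Γ.Adj a b ↔ Γ.Adj (f a) (f b)}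
  one_mem' := by intro a b; simp
  mul_mem' := by
    intro f g hf hg a b
    exact (hg a b).trans (hf (g a) (g b))
  inv_mem' := by
    intro f hf a b
    simpa using (hf (f⁻¹ a) (f⁻¹ b)).symm

def cayAdj {G : Type*} [Group G] (S : Set G) (x y : G) : Prop := y * x⁻¹ ∈ S

def cayAut (G : Type*) [Group G] (S : Set G) : Subgroup (Equiv.Perm G) where
  carrier := {f | ∀ x y, cayAdj S x y ↔ cayAdj S (f x) (f y)}
  one_mem' := by intro a b; simp
  mul_mem' := by
    intro f g hf hg a b
    exact (hg a b).trans (hf (g a) (g b))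
  inv_mem' := by
    intro f hf a b
    simpa using (hf (f⁻¹ a) (f⁻¹ b)).symm

def cayIso {G : Type*} [Group G] (S T : Set G) : Prop :=
  ∃ e : Equiv.Perm G, ∀ x y, cayAdj S x y ↔ cayAdj T (e x) (e y)

def isCI (G : Type*) [Group G] (S : Set G) : Prop :=
  ∀ T : Set G, cayIso S T → ∃ α : G ≃* G, T = α '' S

/-!
Babai's criterion. Write `R` for the right regular representation of `G`, a regular subgroup of
`Aut Cay(G,S)`. Every regular subgroup isomorphic to `G` is `e R e⁻¹` for a permutation `e`
(an orbit map), and when `e R e⁻¹ ≤ Aut Cay(G,S)` the pull-back of `Cay(G,S)` along `e` is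
right-invariant, hence a Cayley digraph `Cay(G,T)`. The CI property turns `e` into a graph
automorphism conjugating `R` onto `e R e⁻¹`, so all such subgroups are conjugate to `R`.
Conversely, an isomorphism `e : Cay(G,S) → Cay(G,T)` makes `e⁻¹ R e` regular in `Aut Cay(G,S)`;
conjugacy corrects `e` into a permutation normalizing `R`, and such a permutation is a group
automorphism followed by a right translation, which carries `S` onto `T`.
-/

open Equiv

namespace Subgroup

variable {X : Type*}

def IsRegular (H : Subgroup (Perm X)) : Prop :=
  (∀ x y, ∃ h ∈ H, h x = y) ∧ ∀ h ∈ H, (∃ x, h x = x) → h = 1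

theorem map_conj_map_conj {M : Type*} [Group M] (H : Subgroup M) (f g : M) :
    (H.map (MulAut.conj f).toMonoidHom).map (MulAut.conj g).toMonoidHom =
      H.map (MulAut.conj (g * f)).toMonoidHom := by
  rw [map_map]
  congr 1
  ext
  simp [mul_assoc]

theorem map_conj_one {M : Type*} [Group M] (H : Subgroup M) :
    H.map (MulAut.conj (1 : M)).toMonoidHom = H := by
  rw [map_one]
  exact map_id H

theorem IsRegular.map_conj {H : Subgroup (Perm X)} (hH : H.IsRegular) (e : Perm X) :
    (H.map (MulAut.conj e).toMonoidHom).IsRegular := by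
  obtain ⟨htrans, hfree⟩ := hH
  refine ⟨fun x y => ?_, ?_⟩
  · obtain ⟨h, hh, hxy⟩ := htrans (e⁻¹ x) (e⁻¹ y)
    exact ⟨_, mem_map_of_mem _ hh, by
      simp only [MulEquiv.coe_toMonoidHom, MulAut.conj_apply, Perm.mul_apply, hxy]
      simp⟩
  · rintro _ ⟨h, hh, rfl⟩ ⟨x, hx⟩
    have hfix : h (e⁻¹ x) = e⁻¹ x := by
      simpa using congr(e⁻¹ $hx)
    simp [hfree h hh ⟨_, hfix⟩]

end Subgroup

section RightRegular

variable (G : Type*) [Group G]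

def rightRegular : G →* Perm G where
  toFun g := Equiv.mulRight g⁻¹
  map_one' := by ext; simp
  map_mul' a b := by ext; simp [mul_assoc]

variable {G}

@[simp]
theorem rightRegular_apply (g x : G) : rightRegular G g x = x * g⁻¹ := rfl

@[simp]
theorem rightRegular_symm_apply (g x : G) : (rightRegular G g).symm x = x * g := by
  simp [rightRegular]

theorem rightRegular_injective : Function.Injective (rightRegular G) := fun a b h => by
  simpa using congr($h 1)

theorem isRegular_range_rightRegular : (rightRegular G).range.IsRegular := by
  refine ⟨fun x y => ⟨rightRegular G (y⁻¹ * x), ⟨_, rfl⟩, by simp⟩, ?_⟩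
  rintro _ ⟨g, rfl⟩ ⟨x, hx⟩
  simp_all

theorem map_conj_range_rightRegular_mulEquiv (α : G ≃* G) :
    (rightRegular G).range.map (MulAut.conj α.toEquiv).toMonoidHom = (rightRegular G).range := by
  rw [MonoidHom.map_range]
  have hcomm : (MulAut.conj α.toEquiv).toMonoidHom.comp (rightRegular G) =
      (rightRegular G).comp α.toMonoidHom := by
    ext g x
    simp
  rw [hcomm, MonoidHom.range_comp, MonoidHom.range_eq_top.mpr α.surjective,
    ← MonoidHom.range_eq_map]

/-- The normalizer of the right regular representation is the holomorph `Aut G ⋉ G`. -/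
theorem exists_mulEquiv_of_map_conj_range_rightRegular_le {φ : Perm G}
    (hφ : (rightRegular G).range.map (MulAut.conj φ).toMonoidHom ≤ (rightRegular G).range) :
    ∃ α : G ≃* G, ∀ x, φ x = α x * φ 1 := by
  have hshift : ∀ b, ∃ d, ∀ x, φ (x * b) = φ x * d := by
    intro b
    obtain ⟨d, hd⟩ := hφ (Subgroup.mem_map_of_mem _ ⟨b⁻¹, rfl⟩)
    refine ⟨d⁻¹, fun x => ?_⟩
    simpa using congr($hd (φ x)).symm
  let ψ : G ≃ G := φ.trans (Equiv.mulRight (φ 1)⁻¹)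
  have hmul : ∀ a b, ψ (a * b) = ψ a * ψ b := by
    intro a b
    simp only [ψ, Equiv.trans_apply, Equiv.coe_mulRight]
    obtain ⟨d, hd⟩ := hshift b
    have hd1 : d = (φ 1)⁻¹ * φ b := eq_inv_mul_of_mul_eq (by simpa using (hd 1).symm)
    rw [hd, hd1]
    group
  exact ⟨MulEquiv.mk' ψ hmul, fun x => (inv_mul_cancel_right (φ x) (φ 1)).symm⟩

theorem exists_map_conj_range_rightRegular_eq {H : Subgroup (Perm G)} (hH : H.IsRegular)
    (μ : G ≃* H) :
    ∃ e : Perm G, (rightRegular G).range.map (MulAut.conj e).toMonoidHom = H := by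
  obtain ⟨htrans, hfree⟩ := hH
  -- the orbit map of `1`, precomposed with inversion so that it intertwines `rightRegular` and `μ`
  let orbit : G → G := fun x => (μ x⁻¹ : Perm G) 1
  have horbit : ∀ g x, orbit (x * g⁻¹) = (μ g : Perm G) (orbit x) := by
    intro g x
    simp only [orbit, mul_inv_rev, inv_inv, map_mul, Subgroup.coe_mul, Perm.mul_apply]
  have hbij : Function.Bijective orbit := by
    refine ⟨fun x y hxy => ?_, fun z => ?_⟩
    · have hfix : (μ (x⁻¹ * y) : Perm G) (orbit y) = orbit y := by
        rw [← horbit, mul_inv_rev, inv_inv, mul_inv_cancel_left, hxy]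
      have hone : (μ (x⁻¹ * y) : Perm G) = 1 := hfree _ (μ _).2 ⟨_, hfix⟩
      rw [OneMemClass.coe_eq_one, MulEquiv.map_eq_one_iff, inv_mul_eq_one] at hone
      exact hone
    · obtain ⟨h, hh, rfl⟩ := htrans 1 z
      exact ⟨(μ.symm ⟨h, hh⟩)⁻¹, by
        simp only [orbit, inv_inv, MulEquiv.apply_symm_apply]⟩
  let e := Equiv.ofBijective orbit hbij
  have hconj :
      (MulAut.conj e).toMonoidHom.comp (rightRegular G) = H.subtype.comp μ.toMonoidHom := by
    ext g y
    obtain ⟨x, rfl⟩ := hbij.2 y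
    simpa [e] using horbit g x
  refine ⟨e, ?_⟩
  rw [MonoidHom.map_range, hconj, MonoidHom.range_comp, MonoidHom.range_eq_top.mpr μ.surjective,
    ← MonoidHom.range_eq_map, Subgroup.range_subtype]

end RightRegular

section Cayley

variable {G : Type*} [Group G]

theorem cayAdj_mul_right (S : Set G) (x y c : G) : cayAdj S (x * c) (y * c) ↔ cayAdj S x y := by
  simp [cayAdj, mul_assoc]

theorem range_rightRegular_le_cayAut (S : Set G) : (rightRegular G).range ≤ cayAut G S := by
  rintro _ ⟨g, rfl⟩ x y
  exact (cayAdj_mul_right S x y g⁻¹).symm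

theorem cayAdj_image_mulEquiv (α : G ≃* G) (S : Set G) (x y : G) :
    cayAdj (α '' S) (α x) (α y) ↔ cayAdj S x y := by
  rw [cayAdj, cayAdj, ← map_inv, ← map_mul, α.injective.mem_set_image]

theorem eq_image_of_cayAdj_iff {S T : Set G} (α : G ≃* G)
    (h : ∀ x y, cayAdj S x y ↔ cayAdj T (α x) (α y)) : T = α '' S := by
  rw [← α.coe_toEquiv, Equiv.image_eq_preimage_symm]
  ext z
  simpa [cayAdj] using (h 1 (α.symm z)).symm

theorem cayAdj_iff_of_map_conj_le_cayAut {S : Set G} {e : Perm G}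
    (he : (rightRegular G).range.map (MulAut.conj e).toMonoidHom ≤ cayAut G S) (x y : G) :
    cayAdj S (e x) (e y) ↔ cayAdj {z | cayAdj S (e 1) (e z)} x y := by
  simpa [cayAdj] using he (Subgroup.mem_map_of_mem _ ⟨x, rfl⟩) (e x) (e y)

theorem map_conj_inv_le_cayAut {S T : Set G} {e : Perm G}
    (he : ∀ x y, cayAdj S x y ↔ cayAdj T (e x) (e y)) {H : Subgroup (Perm G)}
    (hH : H ≤ cayAut G T) : H.map (MulAut.conj e⁻¹).toMonoidHom ≤ cayAut G S := by
  rintro _ ⟨σ, hσ, rfl⟩ x y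
  simpa [he] using hH hσ (e x) (e y)

theorem exists_mem_cayAut_map_conj_eq_of_isCI {S : Set G} (hCI : isCI G S)
    {H : Subgroup (Perm G)} (hH : H.IsRegular) (hHS : H ≤ cayAut G S) (μ : G ≃* H) :
    ∃ f ∈ cayAut G S, (rightRegular G).range.map (MulAut.conj f).toMonoidHom = H := by
  obtain ⟨e, rfl⟩ := exists_map_conj_range_rightRegular_eq hH μ
  have he := cayAdj_iff_of_map_conj_le_cayAut hHS
  obtain ⟨α, hα⟩ := hCI _ ⟨e⁻¹, fun x y => by simpa using he (e⁻¹ x) (e⁻¹ y)⟩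
  refine ⟨e * α.toEquiv, fun x y => ?_, ?_⟩
  · rw [Perm.mul_apply, Perm.mul_apply, he, hα]
    exact (cayAdj_image_mulEquiv α S x y).symm
  · rw [← Subgroup.map_conj_map_conj, map_conj_range_rightRegular_mulEquiv]

end Cayley

theorem stmt_5_general {G : Type*} [Group G] (S : Set G) :
    isCI G S ↔
      ∀ H K : Subgroup (Equiv.Perm G), H ≤ cayAut G S → K ≤ cayAut G S →
        (∀ x y : G, ∃ h ∈ H, h x = y) → (∀ h ∈ H, (∃ x : G, h x = x) → h = 1) →
        (∀ x y : G, ∃ k ∈ K, k x = y) → (∀ k ∈ K, (∃ x : G, k x = x) → k = 1) →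
        Nonempty (H ≃* G) → Nonempty (K ≃* G) →
        ∃ f ∈ cayAut G S, K = H.map (MulAut.conj f).toMonoidHom := by
  constructor
  · rintro hCI H K hHS hKS hHt hHf hKt hKf ⟨μH⟩ ⟨μK⟩
    obtain ⟨f, hf, rfl⟩ :=
      exists_mem_cayAut_map_conj_eq_of_isCI hCI ⟨hHt, hHf⟩ hHS μH.symm
    obtain ⟨f', hf', rfl⟩ :=
      exists_mem_cayAut_map_conj_eq_of_isCI hCI ⟨hKt, hKf⟩ hKS μK.symm
    refine ⟨f' * f⁻¹, mul_mem hf' (inv_mem hf), ?_⟩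
    rw [Subgroup.map_conj_map_conj, inv_mul_cancel_right]
  · rintro hconj T ⟨e, he⟩
    have hR := isRegular_range_rightRegular (G := G)
    have hK := hR.map_conj e⁻¹
    let ρ := MonoidHom.ofInjective (rightRegular_injective (G := G))
    obtain ⟨f, hf, hfK⟩ := hconj _ _ (range_rightRegular_le_cayAut S)
      (map_conj_inv_le_cayAut he (range_rightRegular_le_cayAut T)) hR.1 hR.2 hK.1 hK.2
      ⟨ρ.symm⟩ ⟨(MulEquiv.subgroupMap (MulAut.conj e⁻¹) _).symm.trans ρ.symm⟩
    obtain ⟨α, hα⟩ := exists_mulEquiv_of_map_conj_range_rightRegular_le (φ := e * f) (by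
      rw [← Subgroup.map_conj_map_conj, ← hfK, Subgroup.map_conj_map_conj, mul_inv_cancel,
        Subgroup.map_conj_one])
    refine ⟨α, eq_image_of_cayAdj_iff α fun x y => ?_⟩
    rw [hf, he, ← cayAdj_mul_right T (α x) (α y) ((e * f) 1), ← hα, ← hα]
    rfl

theorem stmt_5 {G : Type*} [Group G] [Fintype G] (S : Set G) :
    isCI G S ↔
      ∀ H K : Subgroup (Equiv.Perm G), H ≤ cayAut G S → K ≤ cayAut G S →
        (∀ x y : G, ∃ h ∈ H, h x = y) → (∀ h ∈ H, (∃ x : G, h x = x) → h = 1) →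
        (∀ x y : G, ∃ k ∈ K, k x = y) → (∀ k ∈ K, (∃ x : G, k x = x) → k = 1) →
        Nonempty (H ≃* G) → Nonempty (K ≃* G) →
        ∃ f ∈ cayAut G S, K = H.map (MulAut.conj f).toMonoidHom :=
  stmt_5_general S
end

section
/- Let Γ = BCay(G,S) be a connected arc-transitive cubic bi-Cayley graph of a finite group G, and let N < Ĝ be a subgroup of the group of right translations that is normal in Aut(Γ). Then N equals the kernel of the action of Aut(Γ) on the set of N-orbits, and the quotient graph Γ_N is a connected cubic arc-transitive graph isomorphic to a bi-Cayley graph of the group Ĝ/N. -/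
/-- The setoid on vertices whose classes are the orbits of a subgroup
of permutations. -/
def orbitSetoid {V : Type*} (N : Subgroup (Equiv.Perm V)) : Setoid V where
  r v w := ∃ n ∈ N, n v = w
  iseqv := by
    constructor
    · intro v; exact ⟨1, N.one_mem, rfl⟩
    · rintro v w ⟨n, hn, rfl⟩
      exact ⟨n⁻¹, N.inv_mem hn, by simp⟩
    · rintro u v w ⟨n, hn, rfl⟩ ⟨m, hm, rfl⟩
      exact ⟨m * n, N.mul_mem hm hn, rfl⟩

/-- The quotient graph of a graph by the orbits of a group of permutations:
vertices are the orbits, and two distinct orbits are adjacent iff some vertex of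
one is adjacent to some vertex of the other. -/
def quotGraph {V : Type*} (Γ : SimpleGraph V) (N : Subgroup (Equiv.Perm V)) :
    SimpleGraph (Quotient (orbitSetoid N)) where
  Adj c d := c ≠ d ∧ ∃ v w : V, Quotient.mk _ v = c ∧ Quotient.mk _ w = d ∧ Γ.Adj v w
  symm := ⟨by
    rintro c d ⟨hne, v, w, hv, hw, h⟩
    exact ⟨hne.symm, w, v, hw, hv, h.symm⟩⟩
  loopless := ⟨by rintro c ⟨hne, -⟩; exact hne rfl⟩

/-- Arc-transitivity: the automorphism group is transitive on ordered pairs of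
adjacent vertices. -/
def IsArcTransitive {V : Type*} (Γ : SimpleGraph V) : Prop :=
  ∀ v w v' w' : V, Γ.Adj v w → Γ.Adj v' w' →
    ∃ f ∈ graphAut Γ, f v = v' ∧ f w = w'

/-!
Let `ψ : G → Ĝ/N` be the projection. Two vertices lie in the same `N`-orbit iff they lie on the
same side and have the same image under `ψ`, so `(x, i) ↦ (ψ x, i)` identifies `Γ_N` with
`BCay(Ĝ/N, ψ(S))` once `ψ` is injective on `S`, and then no two neighbours of a vertex share an
`N`-orbit. This local injectivity is what makes `Γ_N` cubic and forces an automorphism fixing every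
orbit to lie in `N`. Connectivity and arc-transitivity pass to the quotient by any subgroup that is
normalised by the automorphism group.
-/

namespace SimpleGraph

variable {V : Type*} {Γ : SimpleGraph V}

theorem Connected.forall_of_adj_imp {P : V → Prop} (hconn : Γ.Connected) {v₀ : V} (h₀ : P v₀)
    (hstep : ∀ v w, Γ.Adj v w → P v → P w) (v : V) : P v := by
  obtain ⟨p⟩ := hconn.preconnected v₀ v
  induction p with
  | nil => exact h₀
  | cons h _ ih => exact ih (hstep _ _ h h₀)

end SimpleGraph

section OrbitQuotient

open SimpleGraph

variable {V : Type*} {Γ : SimpleGraph V} {N : Subgroup (Equiv.Perm V)}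

theorem orbitSetoid_r_apply (hnorm : ∀ a ∈ graphAut Γ, ∀ n ∈ N, a * n * a⁻¹ ∈ N)
    {f : Equiv.Perm V} (hf : f ∈ graphAut Γ) {v w : V} (h : (orbitSetoid N).r v w) :
    (orbitSetoid N).r (f v) (f w) := by
  obtain ⟨n, hn, rfl⟩ := h
  exact ⟨f * n * f⁻¹, hnorm f hf n hn, by simp⟩

theorem orbitSetoid_r_apply_iff (hnorm : ∀ a ∈ graphAut Γ, ∀ n ∈ N, a * n * a⁻¹ ∈ N)
    {f : Equiv.Perm V} (hf : f ∈ graphAut Γ) {v w : V} :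
    (orbitSetoid N).r (f v) (f w) ↔ (orbitSetoid N).r v w := by
  refine ⟨fun h => ?_, orbitSetoid_r_apply hnorm hf⟩
  simpa using orbitSetoid_r_apply hnorm (inv_mem hf) h

theorem quotGraph_connected (hconn : Γ.Connected) : (quotGraph Γ N).Connected := by
  have hstep : ∀ v w, Γ.Adj v w →
      (quotGraph Γ N).Reachable (Quotient.mk _ v) (Quotient.mk _ w) := by
    intro v w h
    by_cases he : (Quotient.mk _ v : Quotient (orbitSetoid N)) = Quotient.mk _ w
    · rw [he]
    · exact Adj.reachable ⟨he, v, w, rfl, rfl, h⟩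
  rw [connected_iff]
  refine ⟨fun c d => ?_, hconn.nonempty.map (Quotient.mk _)⟩
  induction c, d using Quotient.inductionOn₂ with
  | h v w =>
    exact hconn.forall_of_adj_imp
      (P := fun w => (quotGraph Γ N).Reachable (Quotient.mk _ v) (Quotient.mk _ w))
      Reachable.rfl (fun _ _ h hr => hr.trans (hstep _ _ h)) w

theorem quotGraph_adj_mk_apply_of_adj (hnorm : ∀ a ∈ graphAut Γ, ∀ n ∈ N, a * n * a⁻¹ ∈ N)
    {f : Equiv.Perm V} (hf : f ∈ graphAut Γ) {v w : V}
    (h : (quotGraph Γ N).Adj (Quotient.mk _ v) (Quotient.mk _ w)) :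
    (quotGraph Γ N).Adj (Quotient.mk _ (f v)) (Quotient.mk _ (f w)) := by
  obtain ⟨hne, v', w', hv, hw, hadj⟩ := h
  refine ⟨fun he => hne (Quotient.sound ?_), f v', f w', ?_, ?_, (hf v' w').mp hadj⟩
  · exact (orbitSetoid_r_apply_iff hnorm hf).mp (Quotient.exact he)
  · exact Quotient.sound (orbitSetoid_r_apply hnorm hf (Quotient.exact hv))
  · exact Quotient.sound (orbitSetoid_r_apply hnorm hf (Quotient.exact hw))

theorem quotGraph_isArcTransitive (harc : IsArcTransitive Γ)
    (hnorm : ∀ a ∈ graphAut Γ, ∀ n ∈ N, a * n * a⁻¹ ∈ N) : IsArcTransitive (quotGraph Γ N) := by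
  intro c d c' d' ⟨_, v, w, hv, hw, hadj⟩ ⟨_, v', w', hv', hw', hadj'⟩
  obtain ⟨f, hf, rfl, rfl⟩ := harc v w v' w' hadj hadj'
  subst hv hw hv' hw'
  refine ⟨Quotient.congr f fun _ _ => (orbitSetoid_r_apply_iff hnorm hf).symm, ?_, rfl, rfl⟩
  intro c d
  induction c, d using Quotient.inductionOn₂ with
  | h x y =>
    simp only [Quotient.congr_mk]
    refine ⟨quotGraph_adj_mk_apply_of_adj hnorm hf, fun h => ?_⟩
    simpa using quotGraph_adj_mk_apply_of_adj hnorm (inv_mem hf) h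

theorem mem_of_forall_orbitSetoid_r (hN : N ≤ graphAut Γ) (hconn : Γ.Connected)
    (hunique : ∀ v w w', Γ.Adj v w → Γ.Adj v w' → (orbitSetoid N).r w w' → w = w')
    {a : Equiv.Perm V} (ha : a ∈ graphAut Γ) (hk : ∀ v, (orbitSetoid N).r v (a v)) : a ∈ N := by
  obtain ⟨v₀⟩ := hconn.nonempty
  obtain ⟨n, hn, hnv₀⟩ := hk v₀
  have hb : n⁻¹ * a ∈ graphAut Γ := mul_mem (inv_mem (hN hn)) ha
  have hbk : ∀ v, (orbitSetoid N).r v ((n⁻¹ * a) v) := fun v =>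
    (orbitSetoid N).trans' (hk v) ⟨n⁻¹, inv_mem hn, rfl⟩
  have hfix : ∀ v, (n⁻¹ * a) v = v := by
    refine hconn.forall_of_adj_imp (v₀ := v₀) (by simp [← hnv₀]) fun v w h hv => ?_
    refine (hunique v w _ h ?_ (hbk w)).symm
    simpa [hv] using (hb v w).mp h
  rw [← inv_mul_eq_one.mp (Equiv.ext hfix)]
  exact hn

/-- An automorphism fixing `v` and sending `w` to `u` carries the orbit of `w` and `w'` to that of
`u`, and sends `w'` to `w` or `w'`. -/
theorem orbitSetoid_r_of_isArcTransitive (harc : IsArcTransitive Γ)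
    (hnorm : ∀ a ∈ graphAut Γ, ∀ n ∈ N, a * n * a⁻¹ ∈ N) {v w w' u : V}
    (hdeg : (Γ.neighborSet v).ncard = 3) (hw : Γ.Adj v w) (hw' : Γ.Adj v w') (hne : w ≠ w')
    (hr : (orbitSetoid N).r w w') (hu : Γ.Adj v u) : (orbitSetoid N).r w u := by
  by_cases huw : u = w
  · exact huw ▸ (orbitSetoid N).refl' w
  by_cases huw' : u = w'
  · exact huw' ▸ hr
  have hnbr : Γ.neighborSet v = {w, w', u} := by
    refine (Set.eq_of_subset_of_ncard_le ?_ ?_ (Set.finite_of_ncard_ne_zero (by omega))).symm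
    · rintro _ (rfl | rfl | rfl) <;> assumption
    · rw [hdeg, Set.ncard_eq_three.mpr ⟨w, w', u, hne, Ne.symm huw, Ne.symm huw', rfl⟩]
  obtain ⟨f, hf, hfv, rfl⟩ := harc v w v u hw hu
  have hfw' : f w' ∈ Γ.neighborSet v := by simpa [hfv] using (hf v w').mp hw'
  have hr' := orbitSetoid_r_apply hnorm hf hr
  rw [hnbr] at hfw'
  rcases hfw' with h | h | h
  · exact (orbitSetoid N).symm' (h ▸ hr')
  · exact (orbitSetoid N).trans' hr ((orbitSetoid N).symm' (h ▸ hr'))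
  · exact absurd (f.injective h) hne.symm

theorem quotGraph_iso_of_surjective {W : Type*} {Γ' : SimpleGraph W} (p : V → W)
    (hp : Function.Surjective p) (hr : ∀ v w, (orbitSetoid N).r v w ↔ p v = p w)
    (hhom : ∀ {v w}, Γ.Adj v w → Γ'.Adj (p v) (p w))
    (hlift : ∀ {v b}, Γ'.Adj (p v) b → ∃ w, Γ.Adj v w ∧ p w = b) :
    Nonempty (quotGraph Γ N ≃g Γ') := by
  let e : Quotient (orbitSetoid N) ≃ W := by
    refine Equiv.ofBijective (Quotient.lift p fun v w => (hr v w).mp) ⟨fun c d => ?_, ?_⟩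
    · induction c, d using Quotient.inductionOn₂ with
      | h v w => exact fun h => Quotient.sound ((hr v w).mpr h)
    · intro b
      obtain ⟨v, rfl⟩ := hp b
      exact ⟨Quotient.mk _ v, rfl⟩
  refine ⟨⟨e, fun {c d} => ?_⟩⟩
  induction c, d using Quotient.inductionOn₂ with
  | h v w =>
    change Γ'.Adj (p v) (p w) ↔ _
    constructor
    · intro h
      obtain ⟨w', hvw', hw'⟩ := hlift h
      refine ⟨fun he => h.ne ((hr v w).mp (Quotient.exact he)), v, w', rfl, ?_, hvw'⟩
      exact Quotient.sound ((hr w' w).mpr hw')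
    · rintro ⟨-, v', w', hv, hw, h⟩
      rw [← (hr v' v).mp (Quotient.exact hv), ← (hr w' w).mp (Quotient.exact hw)]
      exact hhom h

end OrbitQuotient

section BiCayley

variable {G Q : Type*} [Group G] [Group Q] {S : Set G}

theorem biTrans_apply (g : G) (v : G × Bool) : biTrans G g v = (v.1 * g⁻¹, v.2) := rfl

theorem biTrans_range_le_graphAut : (biTrans G).range ≤ graphAut (biCayley G S) := by
  rintro _ ⟨g, rfl⟩ v w
  simp only [biCayley, biTrans_apply, mul_inv_rev, inv_inv, mul_assoc, inv_mul_cancel_left]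

theorem biCayley_neighborSet_false (x : G) :
    (biCayley G S).neighborSet (x, false) = (fun s => (s * x, true)) '' S := by
  ext v
  constructor
  · obtain ⟨y, j⟩ := v
    rintro (⟨-, rfl, h⟩ | ⟨⟨⟩, -⟩)
    exact ⟨y * x⁻¹, h, by simp⟩
  · rintro ⟨s, hs, rfl⟩
    exact Or.inl ⟨rfl, rfl, by simpa⟩

theorem biCayley_neighborSet_true (x : G) :
    (biCayley G S).neighborSet (x, true) = (fun s => (s⁻¹ * x, false)) '' S := by
  ext v
  constructor
  · obtain ⟨y, j⟩ := v
    rintro (⟨⟨⟩, -⟩ | ⟨-, rfl, h⟩)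
    exact ⟨x * y⁻¹, h, by simp⟩
  · rintro ⟨s, hs, rfl⟩
    exact Or.inr ⟨rfl, rfl, by simpa⟩

theorem biCayley_ncard_neighborSet (v : G × Bool) :
    ((biCayley G S).neighborSet v).ncard = S.ncard := by
  obtain ⟨x, _ | _⟩ := v
  · rw [biCayley_neighborSet_false, Set.ncard_image_of_injective]
    exact fun s t h => mul_right_cancel (congrArg Prod.fst h)
  · rw [biCayley_neighborSet_true, Set.ncard_image_of_injective]
    exact fun s t h => inv_injective (mul_right_cancel (congrArg Prod.fst h))

theorem biCayley_adj_map (ψ : G →* Q) {v w : G × Bool} (h : (biCayley G S).Adj v w) :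
    (biCayley Q (ψ '' S)).Adj (Prod.map ψ id v) (Prod.map ψ id w) := by
  rcases h with ⟨hv, hw, h⟩ | ⟨hv, hw, h⟩
  · exact Or.inl ⟨hv, hw, ⟨_, h, by simp⟩⟩
  · exact Or.inr ⟨hv, hw, ⟨_, h, by simp⟩⟩

theorem biCayley_exists_adj_of_adj_map (ψ : G →* Q) {v : G × Bool} {b : Q × Bool}
    (h : (biCayley Q (ψ '' S)).Adj (Prod.map ψ id v) b) :
    ∃ w, (biCayley G S).Adj v w ∧ Prod.map ψ id w = b := by
  obtain ⟨x, i⟩ := v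
  obtain ⟨q, j⟩ := b
  rcases h with ⟨rfl, rfl, s, hs, hsq⟩ | ⟨rfl, rfl, s, hs, hsq⟩
  · refine ⟨(s * x, true), Or.inl ⟨rfl, rfl, by simpa⟩, ?_⟩
    simp [hsq]
  · refine ⟨(s⁻¹ * x, false), Or.inr ⟨rfl, rfl, by simpa⟩, ?_⟩
    simp [hsq]

theorem biCayley_eq_of_adj_of_map_eq {ψ : G →* Q} (hψ : Set.InjOn ψ S) {v w w' : G × Bool}
    (h : (biCayley G S).Adj v w) (h' : (biCayley G S).Adj v w')
    (he : Prod.map ψ id w = Prod.map ψ id w') : w = w' := by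
  obtain ⟨x, _ | _⟩ := v
  · rw [← SimpleGraph.mem_neighborSet, biCayley_neighborSet_false] at h h'
    obtain ⟨s, hs, rfl⟩ := h
    obtain ⟨t, ht, rfl⟩ := h'
    simp only [Prod.map, id, Prod.mk.injEq, map_mul, mul_left_inj, and_true] at he
    rw [hψ hs ht he]
  · rw [← SimpleGraph.mem_neighborSet, biCayley_neighborSet_true] at h h'
    obtain ⟨s, hs, rfl⟩ := h
    obtain ⟨t, ht, rfl⟩ := h'
    simp only [Prod.map, id, Prod.mk.injEq, map_mul, map_inv, mul_left_inj, inv_inj,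
      and_true] at he
    rw [hψ hs ht he]

/-- Along any walk from `(1, false)` the image of the first coordinate under `ψ` is `1` on the
`false` side and `c` on the `true` side. -/
theorem MonoidHom.eq_one_of_biCayley_connected (hconn : (biCayley G S).Connected) (ψ : G →* Q)
    {c : Q} (hc : ∀ s ∈ S, ψ s = c) : ψ = 1 := by
  have key : ∀ v : G × Bool, ψ v.1 = if v.2 then c else 1 := by
    refine hconn.forall_of_adj_imp (v₀ := (1, false)) (by simp) ?_
    rintro ⟨x, i⟩ ⟨y, j⟩ (⟨rfl, rfl, h⟩ | ⟨rfl, rfl, h⟩) hx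
    · simpa [← hc _ h] using hx
    · simpa [hx] using hc _ h
  ext g
  simpa using key (g, false)

end BiCayley

section TranslationQuotient

variable (G : Type*) [Group G] (N : Subgroup (Equiv.Perm (G × Bool)))
  [(N.subgroupOf (biTrans G).range).Normal]

def biTransMk : G →* (biTrans G).range ⧸ N.subgroupOf (biTrans G).range :=
  (QuotientGroup.mk' _).comp (biTrans G).rangeRestrict

theorem biTransMk_surjective : Function.Surjective (biTransMk G N) :=
  (QuotientGroup.mk'_surjective _).comp (biTrans G).rangeRestrict_surjective

variable {G N}

theorem biTransMk_eq_one_iff {g : G} : biTransMk G N g = 1 ↔ biTrans G g ∈ N := by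
  rw [biTransMk, MonoidHom.comp_apply, QuotientGroup.mk'_apply, QuotientGroup.eq_one_iff,
    Subgroup.mem_subgroupOf, MonoidHom.coe_rangeRestrict]

theorem orbitSetoid_r_iff_biTransMk (hNG : N ≤ (biTrans G).range) (v w : G × Bool) :
    (orbitSetoid N).r v w ↔ Prod.map (biTransMk G N) id v = Prod.map (biTransMk G N) id w := by
  obtain ⟨x, i⟩ := v
  constructor
  · rintro ⟨n, hn, rfl⟩
    obtain ⟨g, rfl⟩ := hNG hn
    simp [biTrans_apply, biTransMk_eq_one_iff.mpr hn]
  · obtain ⟨y, j⟩ := w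
    simp only [Prod.map, id, Prod.mk.injEq, and_imp]
    rintro hxy rfl
    refine ⟨biTrans G (y⁻¹ * x), ?_, by rw [biTrans_apply]; simp⟩
    rw [← biTransMk_eq_one_iff, map_mul, map_inv, hxy, inv_mul_cancel]

/-- If two elements of `S` had the same image in `Ĝ / N`, then by arc-transitivity all three
would, so that `Ĝ / N` would be trivial by connectivity. -/
theorem biTransMk_injOn {S : Set G} (hS : S.ncard = 3) (hconn : (biCayley G S).Connected)
    (harc : IsArcTransitive (biCayley G S)) (hNG : N ≤ (biTrans G).range)
    (hne : N ≠ (biTrans G).range)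
    (hnorm : ∀ a ∈ graphAut (biCayley G S), ∀ n ∈ N, a * n * a⁻¹ ∈ N) :
    Set.InjOn (biTransMk G N) S := by
  have hadj : ∀ s ∈ S, (biCayley G S).Adj (1, false) (s, true) :=
    fun s hs => Or.inl ⟨rfl, rfl, by simpa⟩
  intro s hs t ht hst
  by_contra hst'
  have hconst : ∀ u ∈ S, biTransMk G N u = biTransMk G N s := by
    intro u hu
    have hsu := orbitSetoid_r_of_isArcTransitive harc hnorm
      (by rw [biCayley_ncard_neighborSet, hS]) (hadj s hs) (hadj t ht) (by simpa using hst')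
      ((orbitSetoid_r_iff_biTransMk hNG _ _).mpr (by simp [hst])) (hadj u hu)
    simpa using ((orbitSetoid_r_iff_biTransMk hNG _ _).mp hsu).symm
  refine hne (le_antisymm hNG ?_)
  rintro _ ⟨g, rfl⟩
  rw [← biTransMk_eq_one_iff, MonoidHom.eq_one_of_biCayley_connected hconn _ hconst]
  rfl

end TranslationQuotient

theorem stmt_14_general {G : Type*} [Group G] (S : Set G) (hS : S.ncard = 3)
    (hconn : (biCayley G S).Connected)
    (harc : IsArcTransitive (biCayley G S))
    (N : Subgroup (Equiv.Perm (G × Bool)))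
    (hNG : N ≤ (biTrans G).range) (hne : N ≠ (biTrans G).range)
    (hnorm : ∀ a ∈ graphAut (biCayley G S), ∀ n ∈ N, a * n * a⁻¹ ∈ N)
    [hquot : (N.subgroupOf (biTrans G).range).Normal] :
    (∀ a ∈ graphAut (biCayley G S),
        ((∀ v : G × Bool, (orbitSetoid N).r v (a v)) ↔ a ∈ N)) ∧
    (quotGraph (biCayley G S) N).Connected ∧
    (∀ c, ((quotGraph (biCayley G S) N).neighborSet c).ncard = 3) ∧
    IsArcTransitive (quotGraph (biCayley G S) N) ∧
    ∃ T : Set ((biTrans G).range ⧸ N.subgroupOf (biTrans G).range),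
      Nonempty (quotGraph (biCayley G S) N ≃g
        biCayley ((biTrans G).range ⧸ N.subgroupOf (biTrans G).range) T) := by
  have hr := orbitSetoid_r_iff_biTransMk hNG
  have hinj := biTransMk_injOn hS hconn harc hNG hne hnorm
  have hunique : ∀ v w w', (biCayley G S).Adj v w → (biCayley G S).Adj v w' →
      (orbitSetoid N).r w w' → w = w' :=
    fun _ w w' h h' hww' => biCayley_eq_of_adj_of_map_eq hinj h h' ((hr w w').mp hww')
  obtain ⟨e⟩ := quotGraph_iso_of_surjective _
    ((biTransMk_surjective G N).prodMap Function.surjective_id) hr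
    (biCayley_adj_map _) (biCayley_exists_adj_of_adj_map _)
  refine ⟨fun a ha => ⟨mem_of_forall_orbitSetoid_r (hNG.trans biTrans_range_le_graphAut) hconn
      hunique ha, fun haN v => ⟨a, haN, rfl⟩⟩,
    quotGraph_connected hconn, fun c => ?_, quotGraph_isArcTransitive harc hnorm, _, ⟨e⟩⟩
  rw [← Set.ncard_image_of_injective _ e.injective, e.image_neighborSet,
    biCayley_ncard_neighborSet, hinj.ncard_image, hS]

theorem stmt_14 {G : Type*} [Group G] [Fintype G] (S : Set G) (hS : S.ncard = 3)
    (hconn : (biCayley G S).Connected)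
    (harc : IsArcTransitive (biCayley G S))
    (N : Subgroup (Equiv.Perm (G × Bool)))
    (hNG : N ≤ (biTrans G).range) (hne : N ≠ (biTrans G).range)
    (hnorm : ∀ a ∈ graphAut (biCayley G S), ∀ n ∈ N, a * n * a⁻¹ ∈ N)
    [hquot : (N.subgroupOf (biTrans G).range).Normal] :
    (∀ a ∈ graphAut (biCayley G S),
        ((∀ v : G × Bool, (orbitSetoid N).r v (a v)) ↔ a ∈ N)) ∧
    (quotGraph (biCayley G S) N).Connected ∧
    (∀ c, ((quotGraph (biCayley G S) N).neighborSet c).ncard = 3) ∧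
    IsArcTransitive (quotGraph (biCayley G S) N) ∧
    ∃ T : Set ((biTrans G).range ⧸ N.subgroupOf (biTrans G).range),
      Nonempty (quotGraph (biCayley G S) N ≃g
        biCayley ((biTrans G).range ⧸ N.subgroupOf (biTrans G).range) T) :=
  stmt_14_general S hS hconn harc N hNG hne hnorm (hquot := hquot)
end
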